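/- arXiv:1512.00650 — 4 statements merged into one kernel-verified Lean document; each statement's English description precedes it below -/
import Mathlib

section
/- Let Γ ⊆ ℝⁿ be uniformly discrete with parameter r (each sup-norm ball of radius at most r contains at most one point of Γ). Let y, v ∈ ℝⁿ with ‖y − v‖∞ < L and R > 0. Then Card(Γ ∩ (B(y,R) Δ B(v,R))) ≤ 2n(R+r)^{n−1}(L+r)/rⁿ, where B(x,R) is the open sup-norm ball and Δ denotes symmetric difference. -/
/-!
Two points of `Γ` at sup-distance `< 2r` would both lie in the `r`-ball around their midpoint,
so `Γ` is `2r`-separated, and a grid of mesh `2r` has at most one point of `Γ` per cell: a box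
with sides `ℓ_j` contains at most `∏ (⌊ℓ_j / 2r⌋ + 1)` points of `Γ`.
A point `x ∈ B(c,R) \ B(w,R)` has a coordinate `i` with `|x_i - w_i| ≥ R`; together with
`|x_i - c_i| < R` this confines `x_i` to an interval of length `|c_i - w_i| ≤ L`. Hence
`B(c,R) \ B(w,R)` is covered by `n` boxes with one side `L` and `n - 1` sides `2R`, and the
symmetric difference is the union of two such differences.
-/

open Set Metric Function

theorem eq_of_dist_lt_two_mul_of_subsingleton_inter_ball {E : Type*} [NormedAddCommGroup E]
    [NormedSpace ℝ E] {Γ : Set E} {r : ℝ} (hΓ : ∀ z, (Γ ∩ ball z r).Subsingleton)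
    {x y : E} (hx : x ∈ Γ) (hy : y ∈ Γ) (hxy : dist x y < 2 * r) : x = y := by
  refine hΓ (midpoint ℝ x y) ⟨hx, ?_⟩ ⟨hy, ?_⟩ <;>
    simp only [mem_ball, dist_left_midpoint, dist_right_midpoint, Real.norm_ofNat] <;>
    linarith

theorem Nat.abs_sub_lt_one_of_floor_eq_floor {a b : ℝ} (ha : 0 ≤ a) (hb : 0 ≤ b)
    (h : ⌊a⌋₊ = ⌊b⌋₊) : |a - b| < 1 :=
  Int.abs_sub_lt_one_of_floor_eq_floor <| by
    rw [← Int.natCast_floor_eq_floor ha, ← Int.natCast_floor_eq_floor hb, h]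

theorem exists_Icc_of_abs_sub_lt_of_le_abs_sub (c w R : ℝ) :
    ∃ a, ∀ t, |t - c| < R → R ≤ |t - w| → t ∈ Icc a (a + |c - w|) := by
  rcases le_total w c with h | h
  · refine ⟨w + R, fun t htc htw => ?_⟩
    rw [abs_of_nonneg (sub_nonneg.2 h)]
    rcases abs_lt.1 htc with ⟨htc₁, htc₂⟩
    rcases le_abs'.1 htw with htw | htw <;> constructor <;> linarith
  · refine ⟨c - R, fun t htc htw => ?_⟩
    rw [abs_of_nonpos (sub_nonpos.2 h)]
    rcases abs_lt.1 htc with ⟨htc₁, htc₂⟩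
    rcases le_abs'.1 htw with htw | htw <;> constructor <;> linarith

section Packing

variable {ι : Type*} [Fintype ι] {Γ : Set (ι → ℝ)} {r : ℝ}

theorem encard_inter_pi_Icc_le (hr : 0 < r)
    (hsep : ∀ x ∈ Γ, ∀ y ∈ Γ, dist x y < 2 * r → x = y) (a ℓ : ι → ℝ) :
    (Γ ∩ univ.pi fun j => Icc (a j) (a j + ℓ j)).encard ≤ (∏ j, (⌊ℓ j / (2 * r)⌋₊ + 1) : ℕ) := by
  classical
  let cell : (ι → ℝ) → ι → ℕ := fun x j => ⌊(x j - a j) / (2 * r)⌋₊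
  have h2r : 0 < 2 * r := by positivity
  calc _ ≤ ((Fintype.piFinset fun j => Finset.range (⌊ℓ j / (2 * r)⌋₊ + 1) : Finset (ι → ℕ)) :
        Set (ι → ℕ)).encard := by
        refine encard_le_encard_of_injOn (f := cell) ?_ ?_
        · rintro x ⟨-, hx⟩
          simp only [Finset.mem_coe, Fintype.mem_piFinset, Finset.mem_range,
            Nat.lt_succ_iff, cell]
          exact fun j => Nat.floor_le_floor (by gcongr; linarith [(hx j (mem_univ j)).2])
        · rintro x ⟨hxΓ, hx⟩ y ⟨hyΓ, hy⟩ hxy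
          refine hsep x hxΓ y hyΓ ((dist_pi_lt_iff h2r).2 fun j => ?_)
          have hxj := (hx j (mem_univ j)).1
          have hyj := (hy j (mem_univ j)).1
          have := Nat.abs_sub_lt_one_of_floor_eq_floor (div_nonneg (sub_nonneg.2 hxj) h2r.le)
            (div_nonneg (sub_nonneg.2 hyj) h2r.le) (congrFun hxy j)
          rwa [← sub_div, sub_sub_sub_cancel_right, abs_div, abs_of_pos h2r, div_lt_one h2r,
            ← Real.dist_eq] at this
    _ = _ := by rw [encard_coe_eq_coe_finsetCard, Fintype.card_piFinset]; simp

theorem ball_diff_ball_subset_iUnion_pi_Icc [DecidableEq ι] {c w : ι → ℝ} {L : ℝ}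
    (hcw : dist c w ≤ L) (R : ℝ) :
    ∃ a : ι → ℝ, ball c R \ ball w R ⊆ ⋃ i, univ.pi fun j =>
      Icc (update (fun j => c j - R) i (a i) j)
        (update (fun j => c j - R) i (a i) j + update (fun _ => 2 * R) i L j) := by
  choose a ha using fun i => exists_Icc_of_abs_sub_lt_of_le_abs_sub (c i) (w i) R
  refine ⟨a, fun x ⟨hxc, hxw⟩ => ?_⟩
  have hR := pos_of_mem_ball hxc
  have hxc' : ∀ j, |x j - c j| < R := fun j => by
    simpa only [Real.dist_eq] using (dist_pi_lt_iff hR).1 hxc j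
  obtain ⟨i, hi⟩ : ∃ i, R ≤ |x i - w i| := by
    simpa only [mem_ball, dist_pi_lt_iff hR, Real.dist_eq, not_forall, not_lt] using hxw
  refine mem_iUnion.2 ⟨i, fun j _ => ?_⟩
  rcases eq_or_ne j i with rfl | hji
  · have hxj := ha j (x j) (hxc' j) hi
    have hcw' : |c j - w j| ≤ L := by
      simpa only [Real.dist_eq] using (dist_le_pi_dist c w j).trans hcw
    simp only [update_self]
    exact ⟨hxj.1, hxj.2.trans (by linarith)⟩
  · simp only [update_of_ne hji]
    constructor <;> linarith [abs_lt.1 (hxc' j)]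

theorem prod_floor_update_add_one [DecidableEq ι] (i : ι) (L R : ℝ) :
    ∏ j, (⌊update (fun _ => 2 * R) i L j / (2 * r)⌋₊ + 1) =
      (⌊L / (2 * r)⌋₊ + 1) * (⌊R / r⌋₊ + 1) ^ (Fintype.card ι - 1) := by
  rw [Fintype.prod_eq_mul_prod_compl i, update_self,
    Finset.prod_congr rfl fun j hj => by rw [update_of_ne (by simpa using hj)]]
  simp [Finset.card_compl, mul_div_mul_left]

theorem encard_inter_ball_diff_ball_le (hr : 0 < r)
    (hsep : ∀ x ∈ Γ, ∀ y ∈ Γ, dist x y < 2 * r → x = y) {c w : ι → ℝ} {L : ℝ}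
    (hcw : dist c w ≤ L) (R : ℝ) :
    (Γ ∩ (ball c R \ ball w R)).encard ≤
      (Fintype.card ι * ((⌊L / (2 * r)⌋₊ + 1) * (⌊R / r⌋₊ + 1) ^ (Fintype.card ι - 1)) : ℕ) := by
  classical
  obtain ⟨a, hcover⟩ := ball_diff_ball_subset_iUnion_pi_Icc hcw R
  set box : ι → Set (ι → ℝ) := fun i => univ.pi fun j =>
    Icc (update (fun j => c j - R) i (a i) j)
      (update (fun j => c j - R) i (a i) j + update (fun _ => 2 * R) i L j)
  calc _ ≤ (⋃ i, Γ ∩ box i).encard := by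
        rw [← inter_iUnion]
        exact encard_le_encard (inter_subset_inter_right Γ hcover)
    _ ≤ ∑ i, (Γ ∩ box i).encard := encard_iUnion_le_of_fintype _
    _ ≤ ∑ _i : ι, (((⌊L / (2 * r)⌋₊ + 1) * (⌊R / r⌋₊ + 1) ^ (Fintype.card ι - 1) : ℕ) : ℕ∞) :=
        Finset.sum_le_sum fun i _ => (encard_inter_pi_Icc_le hr hsep _ _).trans_eq <| by
          rw [prod_floor_update_add_one]
    _ = _ := by simp

theorem ncard_inter_symmDiff_ball_le (hr : 0 < r) (hΓ : ∀ z, (Γ ∩ ball z r).Subsingleton)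
    {y v : ι → ℝ} {L : ℝ} (hyv : dist y v ≤ L) {R : ℝ} (hR : 0 ≤ R) :
    ((Γ ∩ symmDiff (ball y R) (ball v R)).ncard : ℝ) ≤
      2 * Fintype.card ι * (R + r) ^ (Fintype.card ι - 1) * (L + r) / r ^ Fintype.card ι := by
  set n := Fintype.card ι
  set N := n * ((⌊L / (2 * r)⌋₊ + 1) * (⌊R / r⌋₊ + 1) ^ (n - 1))
  have hsep : ∀ x ∈ Γ, ∀ y ∈ Γ, dist x y < 2 * r → x = y := fun x hx y hy =>
    eq_of_dist_lt_two_mul_of_subsingleton_inter_ball hΓ hx hy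
  have hcount : (Γ ∩ symmDiff (ball y R) (ball v R)).encard ≤ (2 * N : ℕ) := by
    rw [Set.symmDiff_def, inter_union_distrib_left]
    calc _ ≤ (Γ ∩ (ball y R \ ball v R)).encard + (Γ ∩ (ball v R \ ball y R)).encard :=
          encard_union_le _ _
      _ ≤ N + N := add_le_add (encard_inter_ball_diff_ball_le hr hsep hyv R)
          (encard_inter_ball_diff_ball_le hr hsep (dist_comm v y ▸ hyv) R)
      _ = (2 * N : ℕ) := by push_cast; ring
  have hL₀ : 0 ≤ L := dist_nonneg.trans hyv
  have hL : (⌊L / (2 * r)⌋₊ + 1 : ℝ) ≤ (L + r) / r :=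
    calc (⌊L / (2 * r)⌋₊ + 1 : ℝ) ≤ L / (2 * r) + 1 := by gcongr; exact Nat.floor_le (by positivity)
      _ ≤ L / r + 1 := by gcongr; linarith
      _ = (L + r) / r := div_add_one hr.ne'
  have hR' : (⌊R / r⌋₊ + 1 : ℝ) ≤ (R + r) / r := by
    rw [← div_add_one hr.ne']
    gcongr
    exact Nat.floor_le (by positivity)
  calc _ ≤ (2 * N : ℝ) := by exact_mod_cast (encard_le_coe_iff_finite_ncard_le.1 hcount).2
    _ ≤ 2 * (n * ((L + r) / r * ((R + r) / r) ^ (n - 1))) := by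
      simp only [N]; push_cast; gcongr
    _ = _ := by
      rcases n with _ | n
      · simp
      · rw [Nat.add_sub_cancel, div_pow, pow_succ]
        field_simp

end Packing

theorem stmt2 {n : ℕ} (Γ : Set (Fin n → ℝ)) (r : ℝ) (hr : 0 < r)
    (hud : ∀ x : Fin n → ℝ, (Γ ∩ Metric.ball x r).Subsingleton)
    (y v : Fin n → ℝ) (L : ℝ) (hyv : dist y v < L) (R : ℝ) (hR : 0 < R) :
    ((Γ ∩ symmDiff (Metric.ball y R) (Metric.ball v R)).ncard : ℝ)
      ≤ 2 * n * (R + r) ^ (n - 1) * (L + r) / r ^ n := by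
  simpa using ncard_inter_symmDiff_ball_le hr hud hyv.le hR.le
end

section
/- Every almost periodic pattern Γ ⊆ ℝⁿ is weakly almost periodic: for every ε > 0 there exists R > 0 such that for all x, y ∈ ℝⁿ there exists v ∈ ℝⁿ with Card((B(x,R) ∩ Γ) Δ ((B(y,R) ∩ Γ) − v)) ≤ ε·Vol(B(0,R)). -/
open MeasureTheory Metric Set Filter

noncomputable def volBall (n : ℕ) (R : ℝ) : ℝ :=
  (volume (Metric.ball (0 : Fin n → ℝ) R)).toReal

noncomputable def DRplus {n : ℕ} (R : ℝ) (Γ Γ' : Set (Fin n → ℝ)) : ℝ :=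
  ⨆ x : Fin n → ℝ, (((symmDiff Γ Γ') ∩ Metric.ball x R).ncard : ℝ) / volBall n R

def RelDense {n : ℕ} (N : Set (Fin n → ℝ)) : Prop :=
  ∃ L > (0:ℝ), ∀ x : Fin n → ℝ, ∃ v ∈ N, dist v x < L

def UnifDiscrete {n : ℕ} (Γ : Set (Fin n → ℝ)) : Prop :=
  ∃ r > (0:ℝ), ∀ x : Fin n → ℝ, (Γ ∩ Metric.ball x r).Subsingleton

def Delone {n : ℕ} (Γ : Set (Fin n → ℝ)) : Prop :=
  UnifDiscrete Γ ∧ RelDense Γ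

def transSet {n : ℕ} (Γ : Set (Fin n → ℝ)) (ε R : ℝ) : Set (Fin n → ℝ) :=
  {v | ∀ R' ≥ R, DRplus R' ((· + v) '' Γ) Γ < ε}

def IsAPP {n : ℕ} (Γ : Set (Fin n → ℝ)) : Prop :=
  Delone Γ ∧ ∀ ε > (0:ℝ), ∃ Rε > (0:ℝ), RelDense (transSet Γ ε Rε)

def IsWAP {n : ℕ} (Γ : Set (Fin n → ℝ)) : Prop :=
  Delone Γ ∧ ∀ ε > (0:ℝ), ∃ R > (0:ℝ), ∀ x y : Fin n → ℝ, ∃ v : Fin n → ℝ,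
    ((symmDiff (Metric.ball x R ∩ Γ) ((· - v) '' (Metric.ball y R ∩ Γ))).ncard : ℝ)
      ≤ ε * volBall n R

/-!
Given `x, y`, relative density of the `ε/2`-almost periods yields one, `u`, with
`dist (y + u) x < L`. Translating the patch `B(y, R) ∩ Γ` by `u` gives `B(y + u, R) ∩ (Γ + u)`,
which differs from `B(x, R) ∩ Γ` only at points of `(Γ + u) Δ Γ` in `B(x, R)` (fewer than
`(ε/2) Vol(B_R)` of them) and at points of `Γ + u` in the shell `B(x, R + L) \ B(x, R - L)`.
Uniform discreteness bounds the latter by packing: disjoint balls of a fixed radius `ρ` around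
them fill part of the `ρ`-thickened shell, whose volume is `O(R^(n-1))`, hence below
`(ε/2) Vol(B_R)` once `R` is large.
-/

open Topology

theorem Set.symmDiff_inter_subset_union {α : Type*} (s t u : Set α) :
    symmDiff s t ∩ u ⊆ (s ∩ u) ∪ (t ∩ u) := by
  rw [← union_inter_distrib_right]
  exact inter_subset_inter_left _ symmDiff_subset_union

theorem Set.ncard_le_ncard_add_ncard_of_subset_union {α : Type*} {s t u : Set α}
    (h : s ⊆ t ∪ u) (ht : t.Finite) (hu : u.Finite) : s.ncard ≤ t.ncard + u.ncard :=
  (ncard_le_ncard h (ht.union hu)).trans (ncard_union_le t u)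

section PseudoMetric

variable {α : Type*} [PseudoMetricSpace α]

theorem thickening_ball_sdiff_ball_subset (x : α) (ρ R₁ R₂ : ℝ) :
    thickening ρ (ball x R₂ \ ball x R₁) ⊆ ball x (R₂ + ρ) \ ball x (R₁ - ρ) := by
  intro p hp
  obtain ⟨q, ⟨hq₂, hq₁⟩, hpq⟩ := mem_thickening_iff.1 hp
  rw [mem_ball] at hq₂
  rw [mem_ball, not_lt] at hq₁
  rw [Set.mem_sdiff, mem_ball, mem_ball, not_lt]
  have := dist_triangle p q x
  have := dist_triangle q p x
  rw [dist_comm q p] at this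
  constructor <;> linarith

theorem symmDiff_ball_subset_ball_sdiff_ball {x z : α} {L : ℝ} (h : dist z x ≤ L) (R : ℝ) :
    symmDiff (ball x R) (ball z R) ⊆ ball x (R + L) \ ball x (R - L) := by
  intro p hp
  have := dist_triangle p z x
  have := dist_triangle p x z
  have h' : dist x z ≤ L := by rwa [dist_comm]
  rcases mem_symmDiff.1 hp with ⟨hx, hz⟩ | ⟨hz, hx⟩ <;>
    simp only [mem_ball, not_lt, Set.mem_sdiff] at * <;> constructor <;> linarith

theorem symmDiff_inter_ball_subset {Γ Γ' : Set α} {x z : α} {L : ℝ} (h : dist z x ≤ L) (R : ℝ) :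
    symmDiff (ball x R ∩ Γ) (ball z R ∩ Γ') ⊆
      (symmDiff Γ' Γ ∩ ball x R) ∪ (Γ' ∩ (ball x (R + L) \ ball x (R - L))) :=
  calc symmDiff (ball x R ∩ Γ) (ball z R ∩ Γ')
      ⊆ symmDiff (ball x R ∩ Γ) (ball x R ∩ Γ') ∪ symmDiff (ball x R ∩ Γ') (ball z R ∩ Γ') :=
        symmDiff_triangle _ _ _
    _ = (symmDiff Γ' Γ ∩ ball x R) ∪ (Γ' ∩ symmDiff (ball x R) (ball z R)) := by
        rw [← inter_symmDiff_distrib_left, ← inter_symmDiff_distrib_right, symmDiff_comm Γ,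
          inter_comm, inter_comm Γ']
    _ ⊆ _ := union_subset_union_right _
        (inter_subset_inter_right _ (symmDiff_ball_subset_ball_sdiff_ball h R))

end PseudoMetric

section Packing

variable {E : Type*} [NormedAddCommGroup E] [MeasurableSpace E] [BorelSpace E] {Γ : Set E}
  {ρ : ℝ}

theorem encard_mul_measure_ball_eq [SecondCountableTopology E] (μ : Measure E)
    [μ.IsAddHaarMeasure] (hΓ : Γ.Pairwise fun p q => 2 * ρ ≤ dist p q) (hρ : 0 < ρ) :
    Γ.encard * μ (ball 0 ρ) = μ (thickening ρ Γ) := by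
  have hdisj : Γ.PairwiseDisjoint (ball · ρ) := fun p hp q hq hpq =>
    ball_disjoint_ball (by linarith [hΓ hp hq hpq])
  rw [thickening_eq_biUnion_ball, measure_biUnion
    (hdisj.countable_of_isOpen (fun _ _ => isOpen_ball) fun p _ => nonempty_ball.2 hρ)
    hdisj fun _ _ => measurableSet_ball, ← ENNReal.tsum_set_const]
  simp_rw [Measure.addHaar_ball_center]

variable [ProperSpace E] {K : Set E}

theorem finite_inter_of_isBounded (hΓ : Γ.Pairwise fun p q => 2 * ρ ≤ dist p q) (hρ : 0 < ρ)
    (hK : Bornology.IsBounded K) : (Γ ∩ K).Finite := by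
  have h := encard_mul_measure_ball_eq Measure.addHaar (hΓ.mono (inter_subset_left (t := K))) hρ
  rw [← Set.encard_ne_top_iff]
  intro htop
  rw [htop, ENat.toENNReal_top, ENNReal.top_mul (measure_ball_pos _ 0 hρ).ne'] at h
  exact (hK.subset inter_subset_right).thickening.measure_lt_top.ne h.symm

theorem ncard_inter_mul_measureReal_ball_le (μ : Measure E) [μ.IsAddHaarMeasure]
    (hΓ : Γ.Pairwise fun p q => 2 * ρ ≤ dist p q) (hρ : 0 < ρ) (hK : Bornology.IsBounded K) :
    (Γ ∩ K).ncard * μ.real (ball 0 ρ) ≤ μ.real (thickening ρ K) := by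
  have h := encard_mul_measure_ball_eq μ (hΓ.mono (inter_subset_left (t := K))) hρ
  rw [← (finite_inter_of_isBounded hΓ hρ hK).cast_ncard_eq, ENat.toENNReal_coe] at h
  rw [measureReal_def, measureReal_def, ← ENNReal.toReal_natCast, ← ENNReal.toReal_mul, h]
  exact ENNReal.toReal_mono hK.thickening.measure_lt_top.ne
    (measure_mono (thickening_subset_of_subset ρ inter_subset_right))

theorem ncard_inter_ball_mul_le (μ : Measure E) [μ.IsAddHaarMeasure]
    (hΓ : Γ.Pairwise fun p q => 2 * ρ ≤ dist p q) (hρ : 0 < ρ) (x : E) (R : ℝ) :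
    (Γ ∩ ball x R).ncard * μ.real (ball 0 ρ) ≤ μ.real (ball 0 (R + ρ)) := by
  refine (ncard_inter_mul_measureReal_ball_le μ hΓ hρ isBounded_ball).trans ?_
  rw [← Measure.addHaar_real_ball_center μ x, add_comm]
  exact measureReal_mono (thickening_ball x ρ R)

theorem ncard_inter_annulus_mul_le (μ : Measure E) [μ.IsAddHaarMeasure]
    (hΓ : Γ.Pairwise fun p q => 2 * ρ ≤ dist p q) (hρ : 0 < ρ) (x : E) {R₁ R₂ : ℝ}
    (hR : R₁ ≤ R₂) : (Γ ∩ (ball x R₂ \ ball x R₁)).ncard * μ.real (ball 0 ρ) ≤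
      μ.real (ball 0 (R₂ + ρ)) - μ.real (ball 0 (R₁ - ρ)) := by
  refine (ncard_inter_mul_measureReal_ball_le μ hΓ hρ (isBounded_ball.subset sdiff_subset)).trans ?_
  rw [← Measure.addHaar_real_ball_center μ x, ← Measure.addHaar_real_ball_center μ x,
    ← measureReal_sdiff (ball_subset_ball (by linarith)) measurableSet_ball
      measure_ball_lt_top.ne]
  exact measureReal_mono (thickening_ball_sdiff_ball_subset x ρ R₁ R₂)
    (isBounded_ball.subset sdiff_subset).measure_lt_top.ne

end Packing

theorem eventually_pow_add_sub_pow_sub_le (n : ℕ) (c : ℝ) {δ : ℝ} (hδ : 0 < δ) :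
    ∀ᶠ R in atTop, (R + c) ^ n - (R - c) ^ n ≤ δ * R ^ n := by
  have hlim : Tendsto (fun R : ℝ => (1 + c / R) ^ n - (1 - c / R) ^ n) atTop (𝓝 0) := by
    have hc : Tendsto (fun R : ℝ => c / R) atTop (𝓝 0) := tendsto_const_nhds.div_atTop tendsto_id
    simpa using (((tendsto_const_nhds (x := (1 : ℝ))).add hc).pow n).sub
      (((tendsto_const_nhds (x := (1 : ℝ))).sub hc).pow n)
  filter_upwards [hlim.eventually (gt_mem_nhds hδ), eventually_gt_atTop 0] with R hR hR₀
  have hRn := pow_pos hR₀ n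
  have hplus : R + c = R * (1 + c / R) := by field_simp
  have hminus : R - c = R * (1 - c / R) := by field_simp
  rw [hplus, hminus, mul_pow, mul_pow]
  nlinarith

section Euclidean

variable {n : ℕ}

theorem volBall_eq {R : ℝ} (hR : 0 < R) : volBall n R = (2 * R) ^ n := by
  rw [volBall, Real.volume_pi_ball _ hR, ENNReal.toReal_ofReal (by positivity)]
  simp

theorem volBall_pos {R : ℝ} (hR : 0 < R) : 0 < volBall n R := by
  rw [volBall_eq hR]
  positivity

theorem UnifDiscrete.exists_pairwise_le_dist {Γ : Set (Fin n → ℝ)} (h : UnifDiscrete Γ) :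
    ∃ ρ > 0, Γ.Pairwise fun p q => 2 * ρ ≤ dist p q := by
  obtain ⟨r, hr, h⟩ := h
  refine ⟨r / 2, half_pos hr, fun p hp q hq hpq => ?_⟩
  by_contra hlt
  exact hpq (h p ⟨hp, mem_ball_self hr⟩ ⟨hq, by rw [mem_ball, dist_comm]; linarith⟩)

theorem ncard_symmDiff_inter_ball_le_DRplus {Γ₁ Γ₂ : Set (Fin n → ℝ)} {ρ R : ℝ}
    (hΓ₁ : Γ₁.Pairwise fun p q => 2 * ρ ≤ dist p q)
    (hΓ₂ : Γ₂.Pairwise fun p q => 2 * ρ ≤ dist p q) (hρ : 0 < ρ) (hR : 0 < R) (x : Fin n → ℝ) :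
    ((symmDiff Γ₁ Γ₂ ∩ ball x R).ncard : ℝ) ≤ DRplus R Γ₁ Γ₂ * volBall n R := by
  have hcount (y : Fin n → ℝ) :
      ((symmDiff Γ₁ Γ₂ ∩ ball y R).ncard : ℝ) ≤ 2 * volBall n (R + ρ) / volBall n ρ := by
    have h₁ : (Γ₁ ∩ ball y R).ncard * volBall n ρ ≤ volBall n (R + ρ) :=
      ncard_inter_ball_mul_le volume hΓ₁ hρ y R
    have h₂ : (Γ₂ ∩ ball y R).ncard * volBall n ρ ≤ volBall n (R + ρ) :=
      ncard_inter_ball_mul_le volume hΓ₂ hρ y R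
    have h : ((symmDiff Γ₁ Γ₂ ∩ ball y R).ncard : ℝ) ≤
        (Γ₁ ∩ ball y R).ncard + (Γ₂ ∩ ball y R).ncard := by
      exact_mod_cast Set.ncard_le_ncard_add_ncard_of_subset_union
        (symmDiff_inter_subset_union Γ₁ Γ₂ (ball y R))
        (finite_inter_of_isBounded hΓ₁ hρ isBounded_ball)
        (finite_inter_of_isBounded hΓ₂ hρ isBounded_ball)
    rw [le_div_iff₀ (volBall_pos hρ)]
    nlinarith [volBall_pos (n := n) hρ]
  rw [← div_le_iff₀ (volBall_pos hR)]
  exact le_ciSup (f := fun y => ((symmDiff Γ₁ Γ₂ ∩ ball y R).ncard : ℝ) / volBall n R)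
    ⟨_, forall_mem_range.2 fun y => div_le_div_of_nonneg_right (hcount y) (volBall_pos hR).le⟩ x

theorem eventually_volBall_add_sub_volBall_sub_le (n : ℕ) (c : ℝ) {δ : ℝ} (hδ : 0 < δ) :
    ∀ᶠ R in atTop, volBall n (R + c) - volBall n (R - c) ≤ δ * volBall n R := by
  filter_upwards [eventually_pow_add_sub_pow_sub_le n c hδ, eventually_gt_atTop |c|]
    with R hR hc
  have := neg_abs_le c
  have := le_abs_self c
  rw [volBall_eq (by linarith), volBall_eq (by linarith), volBall_eq (by linarith),
    mul_pow, mul_pow, mul_pow]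
  nlinarith [pow_pos (two_pos (α := ℝ)) n]

theorem ncard_symmDiff_inter_ball_image_add_le {Γ : Set (Fin n → ℝ)} {ρ L R : ℝ}
    (hΓ : Γ.Pairwise fun p q => 2 * ρ ≤ dist p q) (hρ : 0 < ρ) {x y u : Fin n → ℝ}
    (hdist : dist (y + u) x ≤ L) (hR : 0 < R) :
    ((symmDiff (ball x R ∩ Γ) ((· + u) '' (ball y R ∩ Γ))).ncard : ℝ) ≤
      DRplus R ((· + u) '' Γ) Γ * volBall n R +
        (volBall n (R + (L + ρ)) - volBall n (R - (L + ρ))) / volBall n ρ := by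
  set Γ' := (· + u) '' Γ
  have hΓ' : Γ'.Pairwise fun p q => 2 * ρ ≤ dist p q :=
    (add_left_injective u).injOn.pairwise_image.2
      (hΓ.mono' fun p q h => by rwa [Function.onFun, dist_add_right])
  have himage : (· + u) '' (ball y R ∩ Γ) = ball (y + u) R ∩ Γ' := by
    rw [image_inter (add_left_injective u)]
    exact congrArg (· ∩ Γ') ((IsometryEquiv.addRight u).image_ball y R)
  have hL : 0 ≤ L := dist_nonneg.trans hdist
  have hsymm : ((symmDiff Γ' Γ ∩ ball x R).ncard : ℝ) ≤ DRplus R Γ' Γ * volBall n R :=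
    ncard_symmDiff_inter_ball_le_DRplus hΓ' hΓ hρ hR x
  have hannulus : ((Γ' ∩ (ball x (R + L) \ ball x (R - L))).ncard : ℝ) * volBall n ρ ≤
      volBall n (R + (L + ρ)) - volBall n (R - (L + ρ)) := by
    rw [← add_assoc, ← sub_sub]
    exact ncard_inter_annulus_mul_le volume hΓ' hρ x (by linarith)
  rw [himage]
  calc ((symmDiff (ball x R ∩ Γ) (ball (y + u) R ∩ Γ')).ncard : ℝ)
      ≤ (symmDiff Γ' Γ ∩ ball x R).ncard + (Γ' ∩ (ball x (R + L) \ ball x (R - L))).ncard := by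
        exact_mod_cast Set.ncard_le_ncard_add_ncard_of_subset_union
          (symmDiff_inter_ball_subset hdist R)
          (((finite_inter_of_isBounded hΓ' hρ isBounded_ball).union
            (finite_inter_of_isBounded hΓ hρ isBounded_ball)).subset
              (symmDiff_inter_subset_union _ _ _))
          (finite_inter_of_isBounded hΓ' hρ (isBounded_ball.subset sdiff_subset))
    _ ≤ _ := add_le_add hsymm ((le_div_iff₀ (volBall_pos hρ)).2 hannulus)

end Euclidean

theorem stmt3 {n : ℕ} (Γ : Set (Fin n → ℝ)) (hΓ : IsAPP Γ) : IsWAP Γ := by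
  obtain ⟨hDelone, hAPP⟩ := hΓ
  refine ⟨hDelone, fun ε hε => ?_⟩
  obtain ⟨ρ, hρ, hsep⟩ := hDelone.1.exists_pairwise_le_dist
  obtain ⟨Rδ, -, L, -, hdense⟩ := hAPP (ε / 2) (half_pos hε)
  obtain ⟨R, hRδ, hR, hboundary⟩ := ((eventually_ge_atTop Rδ).and ((eventually_gt_atTop 0).and
    (eventually_volBall_add_sub_volBall_sub_le n (L + ρ)
      (mul_pos (half_pos hε) (volBall_pos (n := n) hρ))))).exists
  refine ⟨R, hR, fun x y => ?_⟩
  obtain ⟨u, hu, hux⟩ := hdense (x - y)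
  have hdist : dist (y + u) x ≤ L :=
    calc dist (y + u) x = dist u (x - y) := by
          rw [dist_eq_norm, dist_eq_norm]
          congr 1
          abel
      _ ≤ L := hux.le
  refine ⟨-u, ?_⟩
  simp only [sub_neg_eq_add]
  calc _ ≤ DRplus R ((· + u) '' Γ) Γ * volBall n R +
        (volBall n (R + (L + ρ)) - volBall n (R - (L + ρ))) / volBall n ρ :=
        ncard_symmDiff_inter_ball_image_add_le hsep hρ hdist hR
    _ ≤ ε / 2 * volBall n R + ε / 2 * volBall n R := by
        refine add_le_add (mul_le_mul_of_nonneg_right (hu R hRδ).le (volBall_pos hR).le) ?_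
        rw [div_le_iff₀ (volBall_pos hρ)]
        linarith
    _ = ε * volBall n R := by ring
end

section
/- Let Γ ⊆ ℝⁿ be a model set modelled on a lattice Λ ⊆ ℝ^{m+n} and window W ⊆ ℝᵐ, and let A ∈ GLₙ(ℝ). Then the set Â(Γ) = {π(Aγ) : γ ∈ Γ} is again a model set: if Λ is spanned by the columns of the block matrix with blocks B₁ (top, m rows) and B₂ (bottom, n rows), then Â(Γ) is the model set modelled on the window W' = W × (−1/2, 1/2]ⁿ ⊆ ℝ^{m+n} and the lattice in ℝ^{(m+n)+n} spanned by the block matrix with rows (B₁, 0), (A B₂, −Id), (0, Id). -/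
def proj1 (m n : ℕ) (v : Fin (m + n) → ℝ) : Fin m → ℝ := fun i => v (Fin.castAdd n i)

def proj2 (m n : ℕ) (v : Fin (m + n) → ℝ) : Fin n → ℝ := fun i => v (Fin.natAdd m i)

def IsLattice {d : ℕ} (Λ : Set (Fin d → ℝ)) : Prop :=
  ∃ b : Module.Basis (Fin d) ℝ (Fin d → ℝ),
    Λ = ((Submodule.span ℤ (Set.range ⇑b) : Submodule ℤ (Fin d → ℝ)) : Set (Fin d → ℝ))

def ModelSet (m n : ℕ) (Λ : Set (Fin (m + n) → ℝ)) (W : Set (Fin m → ℝ)) :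
    Set (Fin n → ℝ) :=
  {x | ∃ l ∈ Λ, proj1 m n l ∈ W ∧ proj2 m n l = x}

noncomputable def roundP (x : ℝ) : ℤ := ⌈x - 1/2⌉

noncomputable def roundPi {n : ℕ} (x : Fin n → ℝ) : Fin n → ℝ := fun i => (roundP (x i) : ℝ)

noncomputable def discr {n : ℕ} (A : Matrix (Fin n) (Fin n) ℝ) (x : Fin n → ℝ) :
    Fin n → ℝ :=
  roundPi (A.mulVec x)

def intLat (n : ℕ) : Set (Fin n → ℝ) := {x | ∀ i, ∃ k : ℤ, x i = (k : ℝ)}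

/-!
Rounding is characterised by its error: `π y = w` for an integer vector `w` exactly when
`y - w ∈ (-1/2, 1/2]ⁿ`. So `x = π (A p₂ λ)` for `λ = B u` exactly when the new lattice point
`(p₁ λ, A p₂ λ - x, x)` has internal part `(p₁ λ, A p₂ λ - x)` in `W × (-1/2, 1/2]ⁿ`.
-/

lemma roundP_eq_iff (x : ℝ) (k : ℤ) : roundP x = k ↔ x - k ∈ Set.Ioc (-(1:ℝ)/2) (1/2) := by
  rw [roundP, Int.ceil_eq_iff, Set.mem_Ioc]
  constructor <;> rintro ⟨h₁, h₂⟩ <;> constructor <;> linarith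

lemma roundPi_eq_iff {n : ℕ} (x : Fin n → ℝ) (w : Fin n → ℤ) :
    roundPi x = (fun i => (w i : ℝ)) ↔ ∀ i, x i - w i ∈ Set.Ioc (-(1:ℝ)/2) (1/2) := by
  simp only [roundPi, funext_iff, Int.cast_inj, roundP_eq_iff]

lemma sub_roundP_mem_Ioc (x : ℝ) : x - roundP x ∈ Set.Ioc (-(1:ℝ)/2) (1/2) :=
  (roundP_eq_iff x _).mp rfl

lemma proj1_append {m n : ℕ} (f : Fin m → ℝ) (g : Fin n → ℝ) :
    proj1 m n (Fin.append f g) = f := funext fun i => Fin.append_left f g i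

lemma proj2_append {m n : ℕ} (f : Fin m → ℝ) (g : Fin n → ℝ) :
    proj2 m n (Fin.append f g) = g := funext fun i => Fin.append_right f g i

theorem stmt7_general (m n : ℕ) (Λ : Set (Fin (m + n) → ℝ)) (W : Set (Fin m → ℝ))
    (B : Matrix (Fin (m + n)) (Fin (m + n)) ℝ)
    (hΛ : Λ = {z | ∃ u : Fin (m + n) → ℤ, z = B.mulVec (fun i => (u i : ℝ))})
    (A : Matrix (Fin n) (Fin n) ℝ)
    (Γ : Set (Fin n → ℝ)) (hΓ : Γ = ModelSet m n Λ W) :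
    discr A '' Γ =
      ModelSet (m + n) n
        {z : Fin ((m + n) + n) → ℝ | ∃ (u : Fin (m + n) → ℤ) (w : Fin n → ℤ),
          z = Fin.append
                (Fin.append
                  (fun i : Fin m => B.mulVec (fun i' => (u i' : ℝ)) (Fin.castAdd n i))
                  (fun i : Fin n =>
                    A.mulVec (fun j => B.mulVec (fun i' => (u i' : ℝ)) (Fin.natAdd m j)) i
                      - (w i : ℝ)))
                (fun i : Fin n => (w i : ℝ))}
        {w' : Fin (m + n) → ℝ | proj1 m n w' ∈ W ∧
          ∀ i, proj2 m n w' i ∈ Set.Ioc (-(1:ℝ)/2) (1/2)} := by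
  subst hΓ hΛ
  ext x
  constructor
  · rintro ⟨-, ⟨-, ⟨u, rfl⟩, hW, rfl⟩, rfl⟩
    set c := B.mulVec fun i => (u i : ℝ)
    refine ⟨_, ⟨u, fun i => roundP (A.mulVec (proj2 m n c) i), rfl⟩, ⟨?_, fun i => ?_⟩, ?_⟩
    · rw [proj1_append, proj1_append]
      exact hW
    · rw [proj1_append, proj2_append]
      exact sub_roundP_mem_Ioc _
    · rw [proj2_append]
      rfl
  · rintro ⟨-, ⟨u, w, rfl⟩, ⟨hW, hbox⟩, rfl⟩
    rw [proj1_append, proj1_append] at hW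
    rw [proj1_append, proj2_append] at hbox
    refine ⟨_, ⟨_, ⟨u, rfl⟩, hW, rfl⟩, ?_⟩
    rw [proj2_append]
    exact (roundPi_eq_iff _ w).mpr hbox

theorem stmt7 (m n : ℕ) (Λ : Set (Fin (m + n) → ℝ)) (W : Set (Fin m → ℝ))
    (B : Matrix (Fin (m + n)) (Fin (m + n)) ℝ) (hB : IsUnit B.det)
    (hΛ : Λ = {z | ∃ u : Fin (m + n) → ℤ, z = B.mulVec (fun i => (u i : ℝ))})
    (A : Matrix (Fin n) (Fin n) ℝ) (hA : IsUnit A.det)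
    (Γ : Set (Fin n → ℝ)) (hΓ : Γ = ModelSet m n Λ W) :
    discr A '' Γ =
      ModelSet (m + n) n
        {z : Fin ((m + n) + n) → ℝ | ∃ (u : Fin (m + n) → ℤ) (w : Fin n → ℤ),
          z = Fin.append
                (Fin.append
                  (fun i : Fin m => B.mulVec (fun i' => (u i' : ℝ)) (Fin.castAdd n i))
                  (fun i : Fin n =>
                    A.mulVec (fun j => B.mulVec (fun i' => (u i' : ℝ)) (Fin.natAdd m j)) i
                      - (w i : ℝ)))
                (fun i : Fin n => (w i : ℝ))}
        {w' : Fin (m + n) → ℝ | proj1 m n w' ∈ W ∧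
          ∀ i, proj2 m n w' i ∈ Set.Ioc (-(1:ℝ)/2) (1/2)} :=
  stmt7_general m n Λ W B hΛ A Γ hΓ
end

section
/- Let A ∈ GLₙ(ℝ) and let I_ℚ(A) be the set of row indices i such that all entries a_{i,j} (1 ≤ j ≤ n) are rational. For every ε > 0 there exist δ > 0 and R₀ > 0 such that for every w ∈ ℝⁿ with ‖w‖∞ < δ and wᵢ = 0 for all i ∈ I_ℚ(A), and every R ≥ R₀, one has D_R⁺(π(Aℤⁿ) Δ π(Aℤⁿ + w)) ≤ ε. -/
open MeasureTheory Metric Set Filter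

def IQ {n : ℕ} (A : Matrix (Fin n) (Fin n) ℝ) : Set (Fin n) :=
  {i | ∀ j, ∃ q : ℚ, A i j = (q : ℝ)}

/-!
A rounded point `π(Av)` can move under the perturbation `w` only through a row `i ∉ I_ℚ(A)`
in which `(Av)ᵢ` lies within `‖w‖∞` of `ℤ + 1/2`. Such a row has an irrational entry `a_{ij}`,
and for a fixed `Q` there is `δ > 0` such that `k a_{ij}` stays `2δ` away from `ℤ` for
`0 < |k| ≤ Q`. Hence two lattice points differing only in coordinate `j`, by at most `Q`, cannot
both be bad for row `i`, and at most a fraction of about `1/(Q+1)` of the lattice points in a box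
are bad. The points of the symmetric difference in a ball of radius `R` come from lattice points
in a box of side about `2‖A⁻¹‖R`, so there are `O(R^n / Q)` of them, which is at most
`ε (2R)^n` once `Q` is large.
-/

open scoped Topology Matrix

lemma abs_roundP_sub_le (x : ℝ) : |(roundP x : ℝ) - x| ≤ 1 / 2 := by
  have h₁ := Int.le_ceil (x - 1 / 2)
  have h₂ := Int.ceil_lt_add_one (x - 1 / 2)
  rw [roundP, abs_le]
  constructor <;> linarith

lemma norm_roundPi_sub_le {n : ℕ} (y : Fin n → ℝ) : ‖roundPi y - y‖ ≤ 1 / 2 :=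
  (pi_norm_le_iff_of_nonneg (by norm_num)).2 fun i => abs_roundP_sub_le (y i)

lemma norm_sub_lt_of_roundPi_mem_ball {n : ℕ} {x y : Fin n → ℝ} {R : ℝ}
    (h : roundPi y ∈ ball x R) : ‖y - x‖ < R + 1 / 2 :=
  calc ‖y - x‖ ≤ ‖y - roundPi y‖ + ‖roundPi y - x‖ := norm_sub_le_norm_sub_add_norm_sub _ _ _
    _ < 1 / 2 + R := by
        rw [norm_sub_rev]
        exact add_lt_add_of_le_of_lt (norm_roundPi_sub_le y) (mem_ball_iff_norm.1 h)
    _ = R + 1 / 2 := add_comm _ _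

lemma exists_int_abs_sub_le_of_ceil_ne {a b : ℝ} (h : ⌈a⌉ ≠ ⌈b⌉) :
    ∃ m : ℤ, |a - m| ≤ |a - b| := by
  have ha := Int.le_ceil a
  have hb := Int.le_ceil b
  rcases h.lt_or_gt with h | h
  · have hab := Int.lt_ceil.1 h
    refine ⟨⌈a⌉, ?_⟩
    rw [abs_of_nonpos (by linarith), abs_of_neg (by linarith)]
    linarith
  · have hba := Int.lt_ceil.1 h
    refine ⟨⌈b⌉, ?_⟩
    rw [abs_of_pos (by linarith), abs_of_nonneg (by linarith)]
    linarith

lemma exists_abs_sub_half_lt_of_roundP_ne {t w δ : ℝ} (hw : |w| < δ)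
    (h : roundP (t + w) ≠ roundP t) : ∃ m : ℤ, |t - 1 / 2 - m| < δ := by
  obtain ⟨m, hm⟩ := exists_int_abs_sub_le_of_ceil_ne (Ne.symm h)
  refine ⟨m, hm.trans_lt ?_⟩
  rwa [show t - 1 / 2 - (t + w - 1 / 2) = -w by ring, abs_neg]

lemma exists_notMem_near_half_of_roundPi_add_ne {n : ℕ} {I : Set (Fin n)} {y w : Fin n → ℝ}
    {δ : ℝ} (hw : ‖w‖ < δ) (hwI : ∀ i ∈ I, w i = 0) (h : roundPi (y + w) ≠ roundPi y) :
    ∃ i ∉ I, ∃ m : ℤ, |y i - 1 / 2 - m| < δ := by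
  obtain ⟨i, hi⟩ : ∃ i, roundP (y i + w i) ≠ roundP (y i) := by
    by_contra! hall
    exact h (funext fun i => congrArg (fun z : ℤ => (z : ℝ)) (hall i))
  refine ⟨i, fun hiI => hi (by rw [hwI i hiI, add_zero]), ?_⟩
  exact exists_abs_sub_half_lt_of_roundP_ne ((norm_le_pi_norm w i).trans_lt hw) hi

lemma Irrational.eventually_two_mul_le_abs_mul_sub {α : ℝ} (hα : Irrational α) (Q : ℕ) :
    ∀ᶠ δ in 𝓝 (0 : ℝ), ∀ k : ℤ, k ≠ 0 → |k| ≤ Q → ∀ m : ℤ, 2 * δ ≤ |α * k - m| := by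
  have hk : ∀ k ∈ (Finset.Icc (-(Q : ℤ)) Q).erase 0,
      ∀ᶠ δ in 𝓝 (0 : ℝ), 2 * δ ≤ |α * k - round (α * k)| := by
    intro k hk
    have hpos : 0 < |α * k - round (α * k)| :=
      abs_pos.2 (sub_ne_zero.2 ((hα.mul_intCast (Finset.ne_of_mem_erase hk)).ne_int _))
    filter_upwards [eventually_lt_nhds (half_pos hpos)] with δ hδ
    linarith
  filter_upwards [(eventually_all_finset _).2 hk] with δ hδ k hk0 hkQ m
  exact (hδ k (by simp [hk0, abs_le.1 hkQ])).trans (round_le _ _)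

lemma eventually_forall_notMem_IQ_exists_gap {n : ℕ} (A : Matrix (Fin n) (Fin n) ℝ) (Q : ℕ) :
    ∀ᶠ δ in 𝓝 (0 : ℝ), ∀ i ∉ IQ A, ∃ j,
      ∀ k : ℤ, k ≠ 0 → |k| ≤ Q → ∀ m : ℤ, 2 * δ ≤ |A i j * k - m| := by
  refine eventually_all.2 fun i => ?_
  by_cases hi : i ∈ IQ A
  · exact .of_forall fun _ h => absurd hi h
  · obtain ⟨j, hj⟩ : ∃ j, ∀ q : ℚ, A i j ≠ q := by simpa [IQ] using hi
    filter_upwards [Irrational.eventually_two_mul_le_abs_mul_sub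
      (fun ⟨q, hq⟩ => hj q hq.symm) Q] with δ hδ _ using ⟨j, hδ⟩

lemma Int.cast_toNat_le {z : ℤ} {a : ℝ} (h : (z : ℝ) ≤ a) (ha : 0 ≤ a) :
    (z.toNat : ℝ) ≤ a := by
  have : ((z.toNat : ℤ) : ℝ) ≤ a := by
    rw [Int.toNat_eq_max, Int.cast_max, Int.cast_zero]
    exact max_le h ha
  exact_mod_cast this

lemma card_le_of_pairwise_lt_abs_sub {s : Finset ℤ} {lo hi : ℤ} {L : ℝ} {Q : ℕ}
    (hs : s ⊆ Finset.Icc lo hi) (hL : (hi - lo : ℝ) ≤ L) (hL0 : 0 ≤ L)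
    (hsep : ∀ x ∈ s, ∀ y ∈ s, x ≠ y → (Q : ℤ) < |x - y|) :
    (s.card : ℝ) ≤ L / (Q + 1) + 1 := by
  have hdisj : (s : Set ℤ).PairwiseDisjoint fun x => Finset.Icc x (x + Q) := by
    intro x hx y hy hxy
    refine Finset.disjoint_left.2 fun z hzx hzy => ?_
    have := lt_abs.1 (hsep x hx y hy hxy)
    rw [Finset.mem_Icc] at hzx hzy
    omega
  have hsub : s.biUnion (fun x => Finset.Icc x (x + Q)) ⊆ Finset.Icc lo (hi + Q) := by
    intro z hz
    obtain ⟨x, hx, hzx⟩ := Finset.mem_biUnion.1 hz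
    have := Finset.mem_Icc.1 (hs hx)
    rw [Finset.mem_Icc] at hzx ⊢
    omega
  have hcard := Finset.card_le_card hsub
  simp only [Finset.card_biUnion hdisj, Int.card_Icc,
    show ∀ x : ℤ, (x + Q + 1 - x).toNat = Q + 1 by omega, Finset.sum_const, smul_eq_mul] at hcard
  have hcardL : ((s.card * (Q + 1) : ℕ) : ℝ) ≤ L + (Q + 1) :=
    (Nat.cast_le.2 hcard).trans (Int.cast_toNat_le (by push_cast; linarith) (by positivity))
  push_cast at hcardL
  rwa [div_add_one (by positivity), le_div_iff₀ (by positivity)]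

section Counting

variable {ι : Type*} [Fintype ι] [DecidableEq ι]

lemma card_Icc_le_pow {lo hi : ι → ℤ} {L : ℝ} (hL : ∀ k, (hi k - lo k : ℝ) ≤ L) (hL0 : 0 ≤ L) :
    ((Finset.Icc lo hi).card : ℝ) ≤ (L + 1) ^ Fintype.card ι := by
  rw [Pi.card_Icc, Nat.cast_prod, ← Finset.card_univ, ← Finset.prod_const]
  refine Finset.prod_le_prod (fun _ _ => Nat.cast_nonneg _) fun k _ => ?_
  rw [Int.card_Icc]
  exact Int.cast_toNat_le (by push_cast; linarith [hL k]) (by linarith)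

lemma card_le_of_eqOn_compl_of_lt_abs_sub {F : Finset (ι → ℤ)} {lo hi : ι → ℤ} {L : ℝ} {Q : ℕ}
    (j : ι) (hF : F ⊆ Finset.Icc lo hi) (hL : (hi j - lo j : ℝ) ≤ L) (hL0 : 0 ≤ L)
    (hoff : ∀ v ∈ F, ∀ v' ∈ F, ∀ k ≠ j, v k = v' k)
    (hsep : ∀ v ∈ F, ∀ v' ∈ F, v ≠ v' → (Q : ℤ) < |v j - v' j|) :
    (F.card : ℝ) ≤ L / (Q + 1) + 1 := by
  have hinj : Set.InjOn (· j) (F : Set (ι → ℤ)) := fun v hv v' hv' hvv' => funext fun k => by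
    by_cases hk : k = j
    · exact hk ▸ hvv'
    · exact hoff v hv v' hv' k hk
  rw [← Finset.card_image_of_injOn hinj]
  refine card_le_of_pairwise_lt_abs_sub (lo := lo j) (hi := hi j) (fun x hx => ?_) hL hL0 ?_
  · obtain ⟨v, hv, rfl⟩ := Finset.mem_image.1 hx
    obtain ⟨hlo, hhi⟩ := Finset.mem_Icc.1 (hF hv)
    exact Finset.mem_Icc.2 ⟨hlo j, hhi j⟩
  · rintro _ hx _ hx' hxx'
    obtain ⟨v, hv, rfl⟩ := Finset.mem_image.1 hx
    obtain ⟨v', hv', rfl⟩ := Finset.mem_image.1 hx'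
    exact hsep v hv v' hv' fun h => hxx' (h ▸ rfl)

lemma card_le_of_lt_abs_sub_along {S : Finset (ι → ℤ)} {lo hi : ι → ℤ} {L : ℝ} {Q : ℕ} (j : ι)
    (hS : S ⊆ Finset.Icc lo hi) (hL : ∀ k, (hi k - lo k : ℝ) ≤ L) (hL0 : 0 ≤ L)
    (hsep : ∀ v ∈ S, ∀ v' ∈ S, (∀ k ≠ j, v k = v' k) → v ≠ v' → (Q : ℤ) < |v j - v' j|) :
    (S.card : ℝ) ≤ (L / (Q + 1) + 1) * (L + 1) ^ (Fintype.card ι - 1) := by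
  set p : (ι → ℤ) → ({k // k ≠ j} → ℤ) := fun v k => v k
  have hfiber : ∀ u ∈ S.image p, ((S.filter (p · = u)).card : ℝ) ≤ L / (Q + 1) + 1 := by
    intro u _
    have hoff : ∀ v ∈ S.filter (p · = u), ∀ v' ∈ S.filter (p · = u), ∀ k ≠ j, v k = v' k :=
      fun v hv v' hv' k hk =>
        congrFun ((Finset.mem_filter.1 hv).2.trans (Finset.mem_filter.1 hv').2.symm) ⟨k, hk⟩
    exact card_le_of_eqOn_compl_of_lt_abs_sub j ((Finset.filter_subset _ _).trans hS) (hL j) hL0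
      hoff fun v hv v' hv' => hsep v (Finset.mem_of_mem_filter v hv) v'
        (Finset.mem_of_mem_filter v' hv') (hoff v hv v' hv')
  have himage : ((S.image p).card : ℝ) ≤ (L + 1) ^ (Fintype.card ι - 1) := by
    have hsub : S.image p ⊆ Finset.Icc (fun k => lo k) (fun k => hi k) := by
      intro u hu
      obtain ⟨v, hv, rfl⟩ := Finset.mem_image.1 hu
      obtain ⟨hlo, hhi⟩ := Finset.mem_Icc.1 (hS hv)
      exact Finset.mem_Icc.2 ⟨fun k => hlo k, fun k => hhi k⟩
    calc ((S.image p).card : ℝ)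
        ≤ (Finset.Icc (fun k : {k // k ≠ j} => lo k) (fun k => hi k)).card :=
          Nat.cast_le.2 (Finset.card_le_card hsub)
      _ ≤ (L + 1) ^ Fintype.card {k // k ≠ j} := card_Icc_le_pow (fun k => hL k) hL0
      _ = (L + 1) ^ (Fintype.card ι - 1) := by simp
  calc (S.card : ℝ) = ∑ u ∈ S.image p, ((S.filter (p · = u)).card : ℝ) := by
        exact_mod_cast Finset.card_eq_sum_card_image p S
    _ ≤ (S.image p).card * (L / (Q + 1) + 1) :=
        (Finset.sum_le_card_nsmul _ _ _ hfiber).trans_eq (nsmul_eq_mul _ _)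
    _ ≤ (L + 1) ^ (Fintype.card ι - 1) * (L / (Q + 1) + 1) :=
        mul_le_mul_of_nonneg_right himage (by positivity)
    _ = _ := mul_comm _ _

lemma lt_abs_sub_of_near_half {a : ι → ℝ} {j : ι} {Q : ℕ} {δ : ℝ}
    (hgap : ∀ k : ℤ, k ≠ 0 → |k| ≤ Q → ∀ m : ℤ, 2 * δ ≤ |a j * k - m|) {v v' : ι → ℤ}
    (hv : ∃ m : ℤ, |∑ k, a k * v k - 1 / 2 - m| < δ)
    (hv' : ∃ m : ℤ, |∑ k, a k * v' k - 1 / 2 - m| < δ)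
    (hoff : ∀ k ≠ j, v k = v' k) (hne : v ≠ v') : (Q : ℤ) < |v j - v' j| := by
  obtain ⟨m, hm⟩ := hv
  obtain ⟨m', hm'⟩ := hv'
  have hj : v j - v' j ≠ 0 := fun h => hne <| funext fun k => by
    by_cases hk : k = j
    · subst hk; omega
    · exact hoff k hk
  have hdiff : ∑ k, a k * v k - ∑ k, a k * v' k = a j * ↑(v j - v' j) := by
    rw [← Finset.sum_sub_distrib, Finset.sum_eq_single j (fun k _ hk => by simp [hoff k hk])
      (by simp)]
    push_cast; ring
  by_contra! hle
  have hfar := hgap _ hj hle (m - m')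
  have hclose : |a j * ↑(v j - v' j) - ↑(m - m')| < 2 * δ := by
    rw [← hdiff]
    calc _ = |(∑ k, a k * v k - 1 / 2 - m) - (∑ k, a k * v' k - 1 / 2 - m')| := by
          push_cast; ring_nf
      _ ≤ |∑ k, a k * v k - 1 / 2 - m| + |∑ k, a k * v' k - 1 / 2 - m'| := abs_sub _ _
      _ < 2 * δ := by linarith
  linarith

open Classical in
noncomputable def nearHalfPoints (a : ι → ℝ) (δ : ℝ) (lo hi : ι → ℤ) : Finset (ι → ℤ) :=
  (Finset.Icc lo hi).filter fun v => ∃ m : ℤ, |∑ k, a k * v k - 1 / 2 - m| < δ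

lemma mem_nearHalfPoints {a : ι → ℝ} {δ : ℝ} {lo hi v : ι → ℤ} :
    v ∈ nearHalfPoints a δ lo hi ↔
      v ∈ Finset.Icc lo hi ∧ ∃ m : ℤ, |∑ k, a k * v k - 1 / 2 - m| < δ := by
  classical
  simp [nearHalfPoints]

lemma card_nearHalfPoints_le (a : ι → ℝ) (j : ι) {Q : ℕ} {δ : ℝ}
    (hgap : ∀ k : ℤ, k ≠ 0 → |k| ≤ Q → ∀ m : ℤ, 2 * δ ≤ |a j * k - m|) {lo hi : ι → ℤ} {L : ℝ}
    (hL : ∀ k, (hi k - lo k : ℝ) ≤ L) (hL0 : 0 ≤ L) :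
    ((nearHalfPoints a δ lo hi).card : ℝ) ≤ (L / (Q + 1) + 1) * (L + 1) ^ (Fintype.card ι - 1) :=
  card_le_of_lt_abs_sub_along j (fun _ hv => (mem_nearHalfPoints.1 hv).1) hL hL0 fun _ hv _ hv' =>
    lt_abs_sub_of_near_half hgap (mem_nearHalfPoints.1 hv).2 (mem_nearHalfPoints.1 hv').2

lemma mem_Icc_ceil_floor_of_norm_sub_le {v : ι → ℤ} {c : ι → ℝ} {T : ℝ}
    (h : ‖(fun k => (v k : ℝ)) - c‖ ≤ T) :
    v ∈ Finset.Icc (fun k => ⌈c k - T⌉) (fun k => ⌊c k + T⌋) := by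
  refine Finset.mem_Icc.2 ⟨fun k => Int.ceil_le.2 ?_, fun k => Int.le_floor.2 ?_⟩ <;>
  · have := (norm_le_pi_norm _ k).trans h
    rw [Pi.sub_apply, Real.norm_eq_abs, abs_le] at this
    linarith

end Counting

lemma ncard_symmDiff_range_inter_le {α β : Type*} (f g : α → β) (S : Set β) (U : Finset α)
    (hU : {a | f a ≠ g a ∧ (f a ∈ S ∨ g a ∈ S)} ⊆ U) :
    (symmDiff (range f) (range g) ∩ S).ncard ≤ 2 * U.card := by
  classical
  have hsub : symmDiff (range f) (range g) ∩ S ⊆ ↑(U.image f ∪ U.image g) := by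
    rintro y ⟨(⟨⟨a, rfl⟩, hg⟩ | ⟨⟨a, rfl⟩, hf⟩), hyS⟩
    · have haU : a ∈ U := hU ⟨fun h => hg ⟨a, h.symm⟩, .inl hyS⟩
      exact Finset.mem_coe.2 (Finset.mem_union_left _ (Finset.mem_image_of_mem f haU))
    · have haU : a ∈ U := hU ⟨fun h => hf ⟨a, h⟩, .inr hyS⟩
      exact Finset.mem_coe.2 (Finset.mem_union_right _ (Finset.mem_image_of_mem g haU))
  calc (symmDiff (range f) (range g) ∩ S).ncard ≤ (U.image f ∪ U.image g).card :=
        (Set.ncard_le_ncard hsub (Finset.finite_toSet _)).trans_eq (Set.ncard_coe_finset _)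
    _ ≤ (U.image f).card + (U.image g).card := Finset.card_union_le _ _
    _ ≤ 2 * U.card := by
        rw [two_mul]
        exact add_le_add Finset.card_image_le Finset.card_image_le

-- The ℓ∞ operator norm, matching the sup norm on `Fin n → ℝ`.
attribute [local instance] Matrix.linftyOpSeminormedAddCommGroup

lemma norm_sub_mulVec_le_of_roundPi_mem_ball {n : ℕ} {A B : Matrix (Fin n) (Fin n) ℝ}
    (hBA : B * A = 1) {u w x : Fin n → ℝ} {R : ℝ} (hw : ‖w‖ ≤ 1 / 2)
    (h : roundPi (A *ᵥ u) ∈ ball x R ∨ roundPi (A *ᵥ u + w) ∈ ball x R) :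
    ‖u - B *ᵥ x‖ ≤ ‖B‖ * (R + 1) := by
  have hAu : ‖A *ᵥ u - x‖ ≤ R + 1 := by
    rcases h with h | h
    · linarith [norm_sub_lt_of_roundPi_mem_ball h]
    · calc ‖A *ᵥ u - x‖ = ‖(A *ᵥ u + w - x) - w‖ := by congr 1; abel
        _ ≤ ‖A *ᵥ u + w - x‖ + ‖w‖ := norm_sub_le _ _
        _ ≤ R + 1 := by linarith [norm_sub_lt_of_roundPi_mem_ball h]
  have hu : u - B *ᵥ x = B *ᵥ (A *ᵥ u - x) := by
    rw [Matrix.mulVec_sub, Matrix.mulVec_mulVec, hBA, Matrix.one_mulVec]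
  rw [hu]
  exact (Matrix.linfty_opNorm_mulVec B _).trans (mul_le_mul_of_nonneg_left hAu (norm_nonneg _))

-- `[boxLo, boxHi]` contains every `v` with `‖A v - x‖ ≤ R + 1`.
noncomputable def boxLo {n : ℕ} (A : Matrix (Fin n) (Fin n) ℝ) (R : ℝ) (x : Fin n → ℝ) :
    Fin n → ℤ :=
  fun k => ⌈(A⁻¹ *ᵥ x) k - ‖A⁻¹‖ * (R + 1)⌉

noncomputable def boxHi {n : ℕ} (A : Matrix (Fin n) (Fin n) ℝ) (R : ℝ) (x : Fin n → ℝ) :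
    Fin n → ℤ :=
  fun k => ⌊(A⁻¹ *ᵥ x) k + ‖A⁻¹‖ * (R + 1)⌋

lemma exists_mem_nearHalfPoints_of_roundPi_ne {n : ℕ} {A : Matrix (Fin n) (Fin n) ℝ}
    (hA : IsUnit A.det) {δ : ℝ} (hδ : δ ≤ 1 / 2) {w : Fin n → ℝ} (hw : ‖w‖ < δ)
    (hwIQ : ∀ i ∈ IQ A, w i = 0) {x : Fin n → ℝ} {R : ℝ} {v : Fin n → ℤ}
    (hne : roundPi (A *ᵥ (fun j => (v j : ℝ))) ≠ roundPi (A *ᵥ (fun j => (v j : ℝ)) + w))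
    (hball : roundPi (A *ᵥ (fun j => (v j : ℝ))) ∈ ball x R ∨
      roundPi (A *ᵥ (fun j => (v j : ℝ)) + w) ∈ ball x R) :
    ∃ i ∉ IQ A, v ∈ nearHalfPoints (A i) δ (boxLo A R x) (boxHi A R x) := by
  obtain ⟨i, hi, hnear⟩ := exists_notMem_near_half_of_roundPi_add_ne hw hwIQ hne.symm
  refine ⟨i, hi, mem_nearHalfPoints.2 ⟨mem_Icc_ceil_floor_of_norm_sub_le ?_, hnear⟩⟩
  exact norm_sub_mulVec_le_of_roundPi_mem_ball (Matrix.nonsing_inv_mul A hA) (hw.le.trans hδ) hball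

lemma ncard_symmDiff_inter_ball_le {n : ℕ} (A : Matrix (Fin n) (Fin n) ℝ) (hA : IsUnit A.det)
    {Q : ℕ} {δ : ℝ} (hδ : δ ≤ 1 / 2)
    (hgap : ∀ i ∉ IQ A, ∃ j, ∀ k : ℤ, k ≠ 0 → |k| ≤ Q → ∀ m : ℤ, 2 * δ ≤ |A i j * k - m|)
    {w : Fin n → ℝ} (hw : ‖w‖ < δ) (hwIQ : ∀ i ∈ IQ A, w i = 0) (x : Fin n → ℝ) {R : ℝ}
    (hR : 0 ≤ R) :
    ((symmDiff {y | ∃ v : Fin n → ℤ, y = roundPi (A.mulVec (fun j => (v j : ℝ)))}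
        {y | ∃ v : Fin n → ℤ, y = roundPi (A.mulVec (fun j => (v j : ℝ)) + w)}
        ∩ ball x R).ncard : ℝ)
      ≤ 2 * (n * ((2 * (‖A⁻¹‖ * (R + 1)) / (Q + 1) + 1) *
        (2 * (‖A⁻¹‖ * (R + 1)) + 1) ^ (n - 1))) := by
  classical
  set T := ‖A⁻¹‖ * (R + 1)
  set rows := Finset.univ.filter (· ∉ IQ A)
  set near := fun i => nearHalfPoints (A i) δ (boxLo A R x) (boxHi A R x)
  have hL : ∀ k, (boxHi A R x k - boxLo A R x k : ℝ) ≤ 2 * T := fun k => by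
    unfold boxHi boxLo
    linarith [Int.floor_le ((A⁻¹ *ᵥ x) k + T), Int.le_ceil ((A⁻¹ *ᵥ x) k - T)]
  simp only [show ∀ F : (Fin n → ℤ) → (Fin n → ℝ), {y | ∃ v, y = F v} = range F from
    fun F => by ext; simp [eq_comm]]
  calc _ ≤ ((2 * (rows.biUnion near).card : ℕ) : ℝ) :=
        Nat.cast_le.2 <| ncard_symmDiff_range_inter_le _ _ _ _ fun v ⟨hne, hball⟩ => by
          obtain ⟨i, hi, hv⟩ := exists_mem_nearHalfPoints_of_roundPi_ne hA hδ hw hwIQ hne hball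
          simpa [rows, near] using ⟨i, hi, hv⟩
    _ ≤ 2 * ∑ i ∈ rows, ((near i).card : ℝ) := by
        push_cast
        exact mul_le_mul_of_nonneg_left (by exact_mod_cast Finset.card_biUnion_le) two_pos.le
    _ ≤ 2 * ∑ i ∈ rows, (2 * T / (Q + 1) + 1) * (2 * T + 1) ^ (n - 1) := by
        gcongr with i hi
        obtain ⟨j, hj⟩ := hgap i (Finset.mem_filter.1 hi).2
        simpa only [Fintype.card_fin] using card_nearHalfPoints_le (A i) j hj hL (by positivity)
    _ ≤ 2 * (n * ((2 * T / (Q + 1) + 1) * (2 * T + 1) ^ (n - 1))) := by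
        rw [Finset.sum_const, nsmul_eq_mul]
        gcongr
        exact_mod_cast (Finset.card_filter_le _ _).trans_eq (Finset.card_fin n)

lemma mul_count_bound_le {C R : ℝ} (hC : 0 ≤ C) {Q : ℕ} (hR : (Q : ℝ) + 1 ≤ R) (n : ℕ) :
    n * ((2 * (C * (R + 1)) / (Q + 1) + 1) * (2 * (C * (R + 1)) + 1) ^ (n - 1))
      ≤ n * ((4 * C + 1) * R) ^ n / (Q + 1) := by
  rcases n with _ | n
  · simp
  have hQ : (0 : ℝ) < Q + 1 := by positivity
  have hR1 : 1 ≤ R := by linarith [(Nat.cast_nonneg Q : (0 : ℝ) ≤ Q)]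
  have hCR : 2 * (C * (R + 1)) ≤ 4 * C * R := by nlinarith
  have hfirst : 2 * (C * (R + 1)) / (Q + 1) + 1 ≤ (4 * C + 1) * R / (Q + 1) := by
    rw [div_add_one hQ.ne']
    gcongr
    linarith
  have hsecond : 2 * (C * (R + 1)) + 1 ≤ (4 * C + 1) * R := by linarith
  rw [Nat.add_sub_cancel]
  calc _ ≤ ((n + 1 : ℕ) : ℝ) * ((4 * C + 1) * R / (Q + 1) * ((4 * C + 1) * R) ^ n) := by
        gcongr
    _ = _ := by ring

theorem stmt12 {n : ℕ} (A : Matrix (Fin n) (Fin n) ℝ) (hA : IsUnit A.det)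
    (ε : ℝ) (hε : 0 < ε) :
    ∃ δ > (0:ℝ), ∃ R₀ > (0:ℝ), ∀ w : Fin n → ℝ, ‖w‖ < δ → (∀ i ∈ IQ A, w i = 0) →
      ∀ R ≥ R₀,
        DRplus R {y | ∃ v : Fin n → ℤ, y = roundPi (A.mulVec (fun j => (v j : ℝ)))}
          {y | ∃ v : Fin n → ℤ, y = roundPi (A.mulVec (fun j => (v j : ℝ)) + w)} ≤ ε := by
  set K := 4 * ‖A⁻¹‖ + 1
  obtain ⟨Q, hQ⟩ : ∃ Q : ℕ, 2 * n * K ^ n ≤ ε * 2 ^ n * (Q + 1) := by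
    refine ⟨⌈2 * n * K ^ n / (ε * 2 ^ n)⌉₊, ?_⟩
    rw [← div_le_iff₀' (by positivity)]
    linarith [Nat.le_ceil (2 * n * K ^ n / (ε * 2 ^ n))]
  obtain ⟨δ, ⟨hδhalf, hgap⟩, hδ⟩ := (((eventually_le_nhds one_half_pos).and
    (eventually_forall_notMem_IQ_exists_gap A Q)).filter_mono nhdsWithin_le_nhds |>.and
      (self_mem_nhdsWithin (s := Ioi 0))).exists
  refine ⟨δ, hδ, Q + 1, by positivity, fun w hw hwIQ R hR => ?_⟩
  have hR0 : 0 < R := lt_of_lt_of_le (by positivity) hR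
  rw [DRplus, volBall, Real.volume_pi_ball 0 hR0, Fintype.card_fin,
    ENNReal.toReal_ofReal (by positivity)]
  refine Real.iSup_le (fun x => ?_) hε.le
  rw [div_le_iff₀ (by positivity)]
  calc _ ≤ 2 * (n * ((2 * (‖A⁻¹‖ * (R + 1)) / (Q + 1) + 1) *
          (2 * (‖A⁻¹‖ * (R + 1)) + 1) ^ (n - 1))) :=
        ncard_symmDiff_inter_ball_le A hA hδhalf hgap hw hwIQ x hR0.le
    _ ≤ 2 * (n * (K * R) ^ n / (Q + 1)) := by
        gcongr
        exact mul_count_bound_le (norm_nonneg _) hR n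
    _ = 2 * n * K ^ n * R ^ n / (Q + 1) := by rw [mul_pow]; ring
    _ ≤ ε * 2 ^ n * (Q + 1) * R ^ n / (Q + 1) := by gcongr
    _ = ε * (2 * R) ^ n := by rw [mul_pow]; field_simp
end
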